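/- The contracted semigroup algebra ℚ₀T¹ is isomorphic as a ℚ-algebra to T₂(ℚ), the algebra of upper triangular 2×2 matrices over ℚ. -/

import Mathlib

/-- The four-element monoid `T¹ = {1, e, f, θ}` with `θ` an absorbing zero,
`e² = e`, `f² = f`, `ef = f`, `fe = e`. -/
inductive T1 : Type
  | one : T1
  | e : T1
  | f : T1
  | theta : T1
deriving DecidableEq

instance : Fintype T1 where
  elems := {.one, .e, .f, .theta}
  complete := by intro x; cases x <;> simp

instance : Monoid T1 where
  one := .one
  mul x y :=
    match x, y with
    | .one, y => y
    | x, .one => x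
    | .theta, _ => .theta
    | _, .theta => .theta
    | _, .e => .e
    | _, .f => .f
  mul_assoc := by decide
  one_mul := by decide
  mul_one := by decide

/-- The contracted semigroup algebra `ℚ₀T¹`: the quotient of the monoid algebra
`ℚ[T¹]` by the two-sided ideal spanned by `θ`. -/
noncomputable abbrev Q0T1 : Type :=
  (TwoSidedIdeal.span {MonoidAlgebra.single T1.theta (1 : ℚ)}).ringCon.Quotient

/-- The `ℚ`-algebra structure on the quotient of a `ℚ`-algebra by a two-sided ideal. -/
noncomputable instance quotAlgebra {A : Type*} [Ring A] [Algebra ℚ A]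
    (I : TwoSidedIdeal A) : Algebra ℚ I.ringCon.Quotient :=
  RingHom.toAlgebra'
    ((I.ringCon.mk' : A →+* I.ringCon.Quotient).comp (algebraMap ℚ A))
    (fun q x => Quotient.inductionOn' x fun a => by
      show (I.ringCon.mk' (algebraMap ℚ A q)) * I.ringCon.mk' a
          = I.ringCon.mk' a * I.ringCon.mk' (algebraMap ℚ A q)
      rw [← map_mul, ← map_mul, Algebra.commutes])

/-- The `ℚ`-algebra of upper triangular `2 × 2` matrices over `ℚ`. -/
def T2Q : Subalgebra ℚ (Matrix (Fin 2) (Fin 2) ℚ) where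
  carrier := {M | M 1 0 = 0}
  mul_mem' := by
    intro a b ha hb
    simp only [Set.mem_setOf_eq] at *
    simp [Matrix.mul_apply, Fin.sum_univ_two, ha, hb]
  add_mem' := by
    intro a b ha hb
    simp only [Set.mem_setOf_eq] at *
    simp [ha, hb]
  algebraMap_mem' := by
    intro q
    simp [Matrix.algebraMap_eq_diagonal, Matrix.diagonal]

/-! Sending `1 ↦ I`, `e ↦ E₁₁`, `f ↦ E₁₁ + E₁₂`, `θ ↦ 0` is a monoid map `T¹ → T₂(ℚ)`: both images
of `e`, `f` have the form `u vᵀ` with `vᵀ u = 1`, so they multiply as `xy = y`. The induced algebra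
map `ℚ[T¹] → T₂(ℚ)` is onto, and since the images of `1, e, f` are linearly independent its kernel
is the line `ℚθ`, which is the ideal generated by `θ`. -/

theorem TwoSidedIdeal.nonempty_quotient_algEquiv_of_ker_eq {R A B : Type*} [CommSemiring R]
    [Ring A] [Ring B] [Algebra R A] [Algebra R B] {I : TwoSidedIdeal A} (f : A →ₐ[R] B)
    (hf : Function.Surjective f) (hker : TwoSidedIdeal.ker f = I) :
    Nonempty (I.ringCon.Quotient ≃ₐ[R] B) := by
  subst hker
  exact ⟨{ RingCon.quotientKerEquivOfSurjective (f : A →+* B) hf with commutes' := f.commutes }⟩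

namespace T2Q

def mk (a b d : ℚ) : T2Q := ⟨!![a, b; 0, d], rfl⟩

@[simp]
lemma mk_inj {a b d a' b' d' : ℚ} : mk a b d = mk a' b' d' ↔ a = a' ∧ b = b' ∧ d = d' := by
  simp [mk, Subtype.ext_iff, and_assoc]

lemma exists_eq_mk (M : T2Q) : ∃ a b d, M = mk a b d := by
  refine ⟨M.1 0 0, M.1 0 1, M.1 1 1, ?_⟩
  ext i j
  fin_cases i <;> fin_cases j <;> simp [mk, M.2.symm]

lemma mk_mul (a b d a' b' d' : ℚ) :
    mk a b d * mk a' b' d' = mk (a * a') (a * b' + b * d') (d * d') := by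
  ext i j
  fin_cases i <;> fin_cases j <;> simp [mk]

lemma mk_add (a b d a' b' d' : ℚ) :
    mk a b d + mk a' b' d' = mk (a + a') (b + b') (d + d') := by
  ext i j
  fin_cases i <;> fin_cases j <;> simp [mk]

lemma smul_mk (c a b d : ℚ) : c • mk a b d = mk (c * a) (c * b) (c * d) := by
  ext i j
  fin_cases i <;> fin_cases j <;> simp [mk]

lemma mk_one_zero_one : mk 1 0 1 = 1 := by
  ext i j
  fin_cases i <;> fin_cases j <;> simp [mk]

lemma mk_zero_zero_zero : mk 0 0 0 = 0 := by
  ext i j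
  fin_cases i <;> fin_cases j <;> simp [mk]

end T2Q

namespace T1

def toT2Q : T1 →* T2Q where
  toFun
    | one => 1
    | e => T2Q.mk 1 0 0
    | f => T2Q.mk 1 1 0
    | theta => 0
  map_one' := rfl
  map_mul' := by
    rintro (_ | _ | _ | _) (_ | _ | _ | _) <;> simp [T2Q.mk_mul]

noncomputable def liftT2Q : MonoidAlgebra ℚ T1 →ₐ[ℚ] T2Q :=
  MonoidAlgebra.lift ℚ T2Q T1 toT2Q

lemma liftT2Q_apply (x : MonoidAlgebra ℚ T1) :
    liftT2Q x = T2Q.mk (x.coeff one + x.coeff e + x.coeff f) (x.coeff f) (x.coeff one) := by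
  rw [liftT2Q, MonoidAlgebra.lift_apply,
    Finsupp.sum_fintype _ (fun t (c : ℚ) => c • toT2Q t) fun _ => zero_smul ℚ _,
    show (Finset.univ : Finset T1) = {one, e, f, theta} from rfl]
  simp only [toT2Q, MonoidHom.coe_mk, OneHom.coe_mk, Finset.mem_insert, reduceCtorEq,
    Finset.mem_singleton, or_self, not_false_eq_true, Finset.sum_insert, Finset.sum_singleton,
    smul_zero, add_zero, ← T2Q.mk_one_zero_one, T2Q.smul_mk, T2Q.mk_add, T2Q.mk_inj]
  refine ⟨?_, ?_, ?_⟩ <;> ring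

lemma liftT2Q_surjective : Function.Surjective liftT2Q := by
  intro M
  obtain ⟨a, b, d, rfl⟩ := T2Q.exists_eq_mk M
  refine ⟨.single one d + .single e (a - b - d) + .single f b, ?_⟩
  rw [liftT2Q_apply]
  simp [MonoidAlgebra.coeff_add, MonoidAlgebra.coeff_single]

lemma eq_single_theta_of_liftT2Q_eq_zero {x : MonoidAlgebra ℚ T1} (hx : liftT2Q x = 0) :
    x = .single theta (x.coeff theta) := by
  rw [liftT2Q_apply, ← T2Q.mk_zero_zero_zero, T2Q.mk_inj] at hx
  obtain ⟨h_sum, h_f, h_one⟩ := hx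
  have h_e : x.coeff e = 0 := by linarith
  apply MonoidAlgebra.coeff_injective
  ext (_ | _ | _ | _) <;> simp [MonoidAlgebra.coeff_single, *]

lemma ker_liftT2Q : TwoSidedIdeal.ker liftT2Q = TwoSidedIdeal.span {.single theta 1} := by
  refine le_antisymm (fun x hx => ?_) (TwoSidedIdeal.span_le.2 ?_)
  · rw [TwoSidedIdeal.mem_ker] at hx
    rw [eq_single_theta_of_liftT2Q_eq_zero hx, ← mul_one (x.coeff theta), ← one_mul theta,
      ← MonoidAlgebra.single_mul_single]
    exact TwoSidedIdeal.mul_mem_left _ _ _ (TwoSidedIdeal.subset_span rfl)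
  · simp [TwoSidedIdeal.mem_ker, liftT2Q, MonoidAlgebra.lift_single, toT2Q]

end T1

theorem contracted_algebra_T1_iso_upper_triangular :
    Nonempty (Q0T1 ≃ₐ[ℚ] T2Q) :=
  TwoSidedIdeal.nonempty_quotient_algEquiv_of_ker_eq T1.liftT2Q T1.liftT2Q_surjective
    T1.ker_liftT2Q
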